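/- arXiv:2401.02699 — 8 statements merged into one kernel-verified Lean document; each statement's English description precedes it below -/
import Mathlib

section
/- Let R be a commutative ring with a prime ideal 𝔫 equal to its nilradical. If the map 𝔫 → 𝔫R_𝔫 (induced by localization at 𝔫) is surjective, then the canonical ring homomorphism R → (R/𝔫) ×_{k(𝔫)} R_𝔫 into the fiber product over the residue field k(𝔫) = R_𝔫/𝔫R_𝔫 is surjective. -/
theorem Ideal.exists_sub_mem_and_map_eq_of_surjOn {R S : Type*} [Ring R] [Ring S] (f : R →+* S)
    {I : Ideal R} (hI : Set.SurjOn f I (I.map f)) {a : R} {y : S} (h : f a - y ∈ I.map f) :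
    ∃ r, r - a ∈ I ∧ f r = y := by
  obtain ⟨x, hx, hfx⟩ := hI h
  refine ⟨a - x, ?_, ?_⟩
  · simpa using I.neg_mem hx
  · rw [map_sub, hfx, sub_sub_cancel]

/-- Let `R` be a commutative ring whose nilradical `𝔫` is prime.  If `𝔫 → 𝔫R_𝔫` is
surjective, then `R → (R/𝔫) ×_{k(𝔫)} R_𝔫` is surjective: for every `a : R` and
`y : R_𝔫` agreeing in the residue field `k(𝔫) = R_𝔫/𝔫R_𝔫`, there is `r : R` with
`r ≡ a mod 𝔫` and `r ↦ y` in `R_𝔫`. -/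
theorem stmt_3 (R : Type*) [CommRing R] (hp : (nilradical R).IsPrime)
    (hsurj : ∀ y ∈ (nilradical R).map
        (algebraMap R (Localization (@Ideal.primeCompl R _ (nilradical R) hp))),
      ∃ x ∈ nilradical R,
        algebraMap R (Localization (@Ideal.primeCompl R _ (nilradical R) hp)) x = y) :
    ∀ (a : R) (y : Localization (@Ideal.primeCompl R _ (nilradical R) hp)),
      algebraMap R (Localization (@Ideal.primeCompl R _ (nilradical R) hp)) a - y ∈
          (nilradical R).map
            (algebraMap R (Localization (@Ideal.primeCompl R _ (nilradical R) hp))) →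
      ∃ r : R, r - a ∈ nilradical R ∧
        algebraMap R (Localization (@Ideal.primeCompl R _ (nilradical R) hp)) r = y :=
  fun _ _ => Ideal.exists_sub_mem_and_map_eq_of_surjOn _ hsurj
end

section
/- Let 𝒪 be a valuation ring with fraction field K, let A be a local ring of Krull dimension zero with residue field A/𝔪_A ≅ K, and let R = 𝒪 ×_K A be the fiber product. Then R is a local ring, the nilradical 𝔫 of R is the kernel of R → 𝒪 and equals the unique minimal prime of R, and R/𝔫 ≅ 𝒪. -/
/-!
`R = 𝒪 ×_K A` is the pullback of `𝒪 → K` along the local homomorphism `A → K`, so it is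
local because `𝒪` is. Since `A` has dimension zero, its maximal ideal, which is the kernel
of `A → K`, consists of nilpotents; hence an element of `R` with first coordinate `0` is
nilpotent, while `𝒪` is reduced. So the kernel of the surjection `R → 𝒪` is the nilradical,
which is prime as `𝒪` is a domain, and is therefore the only minimal prime.
-/

/-- The Milnor fiber product `R = 𝒪 ×_K A` as a subring of `𝒪 × A`. -/
def milnorRing (O K A : Type*) [CommRing O] [CommRing K] [CommRing A]
    (f : O →+* K) (π : A →+* K) : Subring (O × A) :=
  RingHom.eqLocus (f.comp (RingHom.fst O A)) (π.comp (RingHom.snd O A))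

theorem isLocalHom_of_maximalIdeal_le_ker {A K : Type*} [CommRing A] [IsLocalRing A]
    [Semiring K] [Nontrivial K] (π : A →+* K) (h : IsLocalRing.maximalIdeal A ≤ RingHom.ker π) :
    IsLocalHom π where
  map_nonunit a ha := by
    by_contra hna
    have hπa : π a = 0 := h ((IsLocalRing.mem_maximalIdeal a).mpr hna)
    exact not_isUnit_zero (hπa ▸ ha)

theorem minimalPrimes_eq_singleton_nilradical (R : Type*) [CommRing R] [(nilradical R).IsPrime] :
    minimalPrimes R = {nilradical R} := by
  change (⊥ : Ideal R).minimalPrimes = _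
  rw [← Ideal.radical_minimalPrimes]
  exact Ideal.minimalPrimes_eq_subsingleton_self (I := nilradical R)

theorem RingHom.ker_pullbackFst_eq_nilradical {R S T : Type*} [CommRing R] [IsReduced R]
    [CommRing S] [CommRing T] (f : R →+* T) (g : S →+* T) (hg : RingHom.ker g ≤ nilradical S) :
    RingHom.ker (f.pullbackFst g) = nilradical (f.pullback g) := by
  ext ⟨⟨r, s⟩, hrs⟩
  rw [RingHom.mem_ker, mem_nilradical,
    ← IsNilpotent.map_iff (f := (f.pullback g).subtype) Subtype.val_injective]
  change r = 0 ↔ IsNilpotent (r, s)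
  constructor
  · rintro rfl
    have hgs : g s = 0 := by simpa using hrs.symm
    obtain ⟨n, hn⟩ := mem_nilradical.mp (hg hgs)
    exact ⟨n + 1, by simp [pow_succ, hn]⟩
  · intro hnil
    exact (hnil.map (RingHom.fst R S)).eq_zero

theorem stmt_4_general (O K A : Type*) [CommRing O] [IsDomain O] [ValuationRing O]
    [Field K] [Algebra O K]
    [CommRing A] [IsLocalRing A] (hA : ringKrullDim A = 0)
    (π : A →+* K) (hπ : Function.Surjective π)
    (hker : RingHom.ker π = IsLocalRing.maximalIdeal A) :
    IsLocalRing (milnorRing O K A (algebraMap O K) π) ∧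
    RingHom.ker ((RingHom.fst O A).comp (milnorRing O K A (algebraMap O K) π).subtype)
      = nilradical (milnorRing O K A (algebraMap O K) π) ∧
    (∀ p ∈ minimalPrimes (milnorRing O K A (algebraMap O K) π),
      p = nilradical (milnorRing O K A (algebraMap O K) π)) ∧
    Function.Surjective
      ((RingHom.fst O A).comp (milnorRing O K A (algebraMap O K) π).subtype) := by
  -- `milnorRing O K A f π` unfolds to `f.pullback π`.
  have : Ring.KrullDimLE 0 A := ringKrullDimZero_iff_ringKrullDim_eq_zero.mpr hA
  have : IsLocalHom π := isLocalHom_of_maximalIdeal_le_ker π hker.ge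
  have hkerFst : RingHom.ker ((algebraMap O K).pullbackFst π) =
      nilradical ((algebraMap O K).pullback π) :=
    (algebraMap O K).ker_pullbackFst_eq_nilradical π
      (hker.trans (Ring.KrullDimLE.nilradical_eq_maximalIdeal A).symm).le
  have : (nilradical ((algebraMap O K).pullback π)).IsPrime := hkerFst ▸ RingHom.ker_isPrime _
  exact ⟨(algebraMap O K).isLocalRing_pullback π, hkerFst,
    fun p hp => (minimalPrimes_eq_singleton_nilradical ((algebraMap O K).pullback π)).subset hp,
    (algebraMap O K).surjective_pullbackFst_of_surjective π hπ⟩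

/-- Let `𝒪` be a valuation ring with fraction field `K`, `A` a zero-dimensional local
ring with residue field `K`, and `R = 𝒪 ×_K A`.  Then `R` is local, the nilradical of
`R` is the kernel of `R → 𝒪`, it is the unique minimal prime, and `R/𝔫 ≅ 𝒪`
(the projection `R → 𝒪` is surjective with kernel the nilradical). -/
theorem stmt_4 (O K A : Type*) [CommRing O] [IsDomain O] [ValuationRing O]
    [Field K] [Algebra O K] [IsFractionRing O K]
    [CommRing A] [IsLocalRing A] (hA : ringKrullDim A = 0)
    (π : A →+* K) (hπ : Function.Surjective π)
    (hker : RingHom.ker π = IsLocalRing.maximalIdeal A) :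
    IsLocalRing (milnorRing O K A (algebraMap O K) π) ∧
    RingHom.ker ((RingHom.fst O A).comp (milnorRing O K A (algebraMap O K) π).subtype)
      = nilradical (milnorRing O K A (algebraMap O K) π) ∧
    (∀ p ∈ minimalPrimes (milnorRing O K A (algebraMap O K) π),
      p = nilradical (milnorRing O K A (algebraMap O K) π)) ∧
    Function.Surjective
      ((RingHom.fst O A).comp (milnorRing O K A (algebraMap O K) π).subtype) :=
  stmt_4_general O K A hA π hπ hker
end

section
/- Let 𝒪 be a valuation ring with fraction field K, A a zero-dimensional local ring with residue field K, and R = 𝒪 ×_K A. Then the localization of R at its nilradical is isomorphic to A, and the ring of total fractions Q(R) (the localization of R at its set of non-zerodivisors) is isomorphic to A. -/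
/-!
The second projection `R → A` is injective because `𝒪 → K` is, so `R` is a subring of `A`.
Every `a ∈ A` is a fraction `r / s` of elements of `R`: write `π a = o / t` in `K`, lift `t` to
some `b ∈ A`, and take `s = (t, b)`, `r = (o, a b)`; `b` is a unit since `π b = t` is and a
surjection of local rings is local. Hence `A` is the localization of `R` at the preimage of `Aˣ`.
Since `A` is local of dimension zero, its non-units are exactly its nilpotents, so this preimage
is both the complement of the nilradical of `R` and the set of non-zerodivisors of `R`.
-/

open Function IsLocalRing

section ComapIsUnit

variable {R A : Type*} [CommRing R] [CommRing A] [Algebra R A]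

theorem isLocalization_comap_isUnit_submonoid (hinj : Injective (algebraMap R A))
    (hsurj : ∀ a : A, ∃ r s : R,
      IsUnit (algebraMap R A s) ∧ a * algebraMap R A s = algebraMap R A r) :
    IsLocalization ((IsUnit.submonoid A).comap (algebraMap R A)) A where
  map_units s := s.2
  surj a := by
    obtain ⟨r, s, hs, h⟩ := hsurj a
    exact ⟨(r, ⟨s, hs⟩), h⟩
  exists_of_eq h := ⟨1, by rw [hinj h]⟩

variable [IsLocalRing A]

theorem primeCompl_comap_maximalIdeal :
    ((maximalIdeal A).comap (algebraMap R A)).primeCompl =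
      (IsUnit.submonoid A).comap (algebraMap R A) :=
  Submonoid.ext fun _ => notMem_maximalIdeal

variable [Ring.KrullDimLE 0 A]

theorem nilradical_eq_comap_maximalIdeal (hinj : Injective (algebraMap R A)) :
    nilradical R = (maximalIdeal A).comap (algebraMap R A) :=
  Ideal.ext fun _ =>
    (IsNilpotent.map_iff hinj).symm.trans Ring.KrullDimLE.isNilpotent_iff_mem_maximalIdeal

theorem nonZeroDivisors_eq_comap_isUnit_submonoid (hinj : Injective (algebraMap R A)) :
    nonZeroDivisors R = (IsUnit.submonoid A).comap (algebraMap R A) := by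
  have : Nontrivial R := (algebraMap R A).domain_nontrivial
  ext x
  refine ⟨fun hx => ?_, fun hx => ?_⟩
  · by_contra hu
    obtain ⟨n, hn⟩ : IsNilpotent x :=
      (IsNilpotent.map_iff hinj).mp (Ring.KrullDimLE.isNilpotent_iff_mem_nonunits.mpr hu)
    exact zero_notMem_nonZeroDivisors (hn ▸ pow_mem hx n)
  · refine mem_nonZeroDivisors_iff_right.mpr fun y hy => hinj ?_
    rw [map_zero, ← (show IsUnit (algebraMap R A x) from hx).mul_left_eq_zero, ← map_mul, hy,
      map_zero]

end ComapIsUnit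

namespace milnorRing

variable {O K A : Type*} [CommRing O] [CommRing K] [CommRing A] {f : O →+* K} {π : A →+* K}

theorem mem_iff {x : O × A} : x ∈ milnorRing O K A f π ↔ f x.1 = π x.2 := Iff.rfl

instance : Algebra (milnorRing O K A f π) A :=
  ((RingHom.snd O A).comp (milnorRing O K A f π).subtype).toAlgebra

theorem algebraMap_injective (hf : Injective f) :
    Injective (algebraMap (milnorRing O K A f π) A) := by
  intro x y hxy
  have hfst : f (x : O × A).1 = f (y : O × A).1 := by
    rw [mem_iff.mp x.2, mem_iff.mp y.2]
    exact congrArg π hxy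
  exact Subtype.ext (Prod.ext (hf hfst) hxy)

theorem exists_mul_algebraMap_eq [Algebra O K] [IsFractionRing O K] [IsLocalHom π]
    (hπ : Surjective π) (a : A) :
    ∃ r s : milnorRing O K A (algebraMap O K) π,
      IsUnit (algebraMap _ A s) ∧ a * algebraMap _ A s = algebraMap _ A r := by
  obtain ⟨⟨o, t⟩, hot⟩ := IsLocalization.surj (nonZeroDivisors O) (π a)
  obtain ⟨b, hb⟩ := hπ (algebraMap O K t)
  refine ⟨⟨(o, a * b), ?_⟩, ⟨((t : O), b), mem_iff.mpr hb.symm⟩, ?_, rfl⟩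
  · rw [mem_iff, map_mul, hb, ← hot]
  · exact (isUnit_map_iff π b).mp (hb ▸ IsLocalization.map_units K t)

end milnorRing

theorem stmt_5_general (O K A : Type*) [CommRing O]
    [Field K] [Algebra O K] [IsFractionRing O K]
    [CommRing A] [IsLocalRing A] (hA : ringKrullDim A = 0)
    (π : A →+* K) (hπ : Function.Surjective π) :
    ∃ hp : (nilradical (milnorRing O K A (algebraMap O K) π)).IsPrime,
      Nonempty (Localization
          (@Ideal.primeCompl _ _ (nilradical (milnorRing O K A (algebraMap O K) π)) hp)
        ≃+* A) ∧
      Nonempty (FractionRing (milnorRing O K A (algebraMap O K) π) ≃+* A) := by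
  set R := milnorRing O K A (algebraMap O K) π
  have : Ring.KrullDimLE 0 A := ringKrullDimZero_iff_ringKrullDim_eq_zero.mpr hA
  have : IsLocalHom π := .of_surjective π hπ
  have hinj : Injective (algebraMap R A) :=
    milnorRing.algebraMap_injective (IsFractionRing.injective O K)
  have hloc := isLocalization_comap_isUnit_submonoid hinj (milnorRing.exists_mul_algebraMap_eq hπ)
  have : IsFractionRing R A := by
    rwa [IsFractionRing, nonZeroDivisors_eq_comap_isUnit_submonoid hinj]
  rw [nilradical_eq_comap_maximalIdeal hinj]
  have : IsLocalization ((maximalIdeal A).comap (algebraMap R A)).primeCompl A := by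
    rwa [primeCompl_comap_maximalIdeal]
  exact ⟨inferInstance, ⟨(Localization.algEquiv _ A).toRingEquiv⟩,
    ⟨(FractionRing.algEquiv R A).toRingEquiv⟩⟩

/-- Let `𝒪` be a valuation ring with fraction field `K`, `A` a zero-dimensional local
ring with residue field `K`, and `R = 𝒪 ×_K A`.  Then the nilradical of `R` is prime,
the localization of `R` at its nilradical is isomorphic to `A`, and the total ring of
fractions `Q(R)` (localization at the non-zerodivisors) is isomorphic to `A`. -/
theorem stmt_5 (O K A : Type*) [CommRing O] [IsDomain O] [ValuationRing O]
    [Field K] [Algebra O K] [IsFractionRing O K]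
    [CommRing A] [IsLocalRing A] (hA : ringKrullDim A = 0)
    (π : A →+* K) (hπ : Function.Surjective π)
    (hker : RingHom.ker π = IsLocalRing.maximalIdeal A) :
    ∃ hp : (nilradical (milnorRing O K A (algebraMap O K) π)).IsPrime,
      Nonempty (Localization
          (@Ideal.primeCompl _ _ (nilradical (milnorRing O K A (algebraMap O K) π)) hp)
        ≃+* A) ∧
      Nonempty (FractionRing (milnorRing O K A (algebraMap O K) π) ≃+* A) :=
  stmt_5_general O K A hA π hπ
end

section
/- Let 𝒪 be a henselian valuation ring with fraction field K, A a zero-dimensional local ring with residue field K, and R = 𝒪 ×_K A. Then R is a henselian local ring. -/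
open Polynomial IsLocalRing

theorem RingHom.isLocalHom_of_surjective_of_ker_le_jacobson {R S : Type*} [CommRing R]
    [CommRing S] (f : R →+* S) (hf : Function.Surjective f)
    (hker : RingHom.ker f ≤ Ideal.jacobson ⊥) : IsLocalHom f where
  map_nonunit x hx := by
    obtain ⟨v, hv⟩ := hx.exists_right_inv
    obtain ⟨y, rfl⟩ := hf v
    have hmem : x * y - 1 ∈ RingHom.ker f := by simp [hv]
    have hxy : IsUnit (x * y) := by
      simpa using Ideal.mem_jacobson_bot.mp (hker hmem) 1
    exact isUnit_of_mul_isUnit_left hxy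

theorem IsLocalRing.isUnit_eval_of_sub_mem_maximalIdeal {R : Type*} [CommRing R] [IsLocalRing R]
    (p : R[X]) {a b : R} (ha : IsUnit (p.eval a)) (hab : b - a ∈ maximalIdeal R) :
    IsUnit (p.eval b) := by
  obtain ⟨c, hc⟩ := sub_dvd_eval_sub b a p
  have hdiff : p.eval b - p.eval a ∈ maximalIdeal R := hc ▸ Ideal.mul_mem_right c _ hab
  by_contra hb
  have ha_mem : p.eval a ∈ maximalIdeal R := by
    simpa using Ideal.sub_mem _ ((mem_maximalIdeal _).mpr hb) hdiff
  exact (mem_maximalIdeal _).mp ha_mem ha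

theorem HenselianLocalRing.of_surjective_of_ker_le_nilradical {R S : Type*} [CommRing R]
    [CommRing S] [HenselianLocalRing S] (f : R →+* S) (hf : Function.Surjective f)
    (hker : RingHom.ker f ≤ nilradical R) : HenselianLocalRing R := by
  have : Nontrivial R := f.domain_nontrivial
  have : IsLocalHom f := f.isLocalHom_of_surjective_of_ker_le_jacobson hf
    (hker.trans Ideal.radical_le_jacobson)
  have : IsLocalRing R := f.domain_isLocalRing
  have hmem (x : R) : f x ∈ maximalIdeal S ↔ x ∈ maximalIdeal R := map_mem_nonunits_iff f x
  refine ⟨fun F hF a₀ hroot hunit ↦ ?_⟩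
  obtain ⟨b, hb, hba₀⟩ := HenselianLocalRing.is_henselian (F.map f) (hF.map f) (f a₀)
    (by rwa [eval_map_apply, hmem]) (by simpa [derivative_map, eval_map_apply] using hunit.map f)
  obtain ⟨a₁, rfl⟩ := hf b
  have ha₁a₀ : a₁ - a₀ ∈ maximalIdeal R := by rwa [← hmem, map_sub]
  have hnil : IsNilpotent (F.eval a₁) :=
    hker (by simpa [RingHom.mem_ker, eval_map_apply] using hb)
  obtain ⟨r, ⟨hra₁, hr⟩, -⟩ := existsUnique_nilpotent_sub_and_aeval_eq_zero (R := R) (S := R)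
    (by simpa using hnil) (by simpa using isUnit_eval_of_sub_mem_maximalIdeal _ hunit ha₁a₀)
  refine ⟨r, by simpa using hr, ?_⟩
  rw [show r - a₀ = (a₁ - a₀) - (a₁ - r) by ring]
  exact Ideal.sub_mem _ ha₁a₀ (nilradical_le_prime _ hra₁)

theorem RingHom.ker_pullbackFst_le_nilradical {R S T : Type*} [CommRing R] [CommRing S]
    [CommRing T] (f : R →+* T) (g : S →+* T) (hg : RingHom.ker g ≤ nilradical S) :
    RingHom.ker (f.pullbackFst g) ≤ nilradical (f.pullback g) := by
  rintro ⟨⟨r, s⟩, hrs⟩ (rfl : r = 0)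
  obtain ⟨n, hn⟩ := mem_nilradical.mp (hg (show g s = 0 by simpa using hrs.symm))
  refine ⟨n + 1, Subtype.ext ?_⟩
  simp [Prod.ext_iff, pow_succ, hn]

theorem stmt_7_general (O K A : Type*) [CommRing O]
    [HenselianLocalRing O]
    [Field K] [Algebra O K]
    [CommRing A] [IsLocalRing A] (hA : ringKrullDim A = 0)
    (π : A →+* K) (hπ : Function.Surjective π)
    (hker : RingHom.ker π = IsLocalRing.maximalIdeal A) :
    HenselianLocalRing (milnorRing O K A (algebraMap O K) π) := by
  have : Ring.KrullDimLE 0 A := Ring.krullDimLE_iff.mpr hA.le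
  have hπ_nil : RingHom.ker π ≤ nilradical A := by
    rw [hker, Ring.KrullDimLE.nilradical_eq_maximalIdeal]
  exact .of_surjective_of_ker_le_nilradical _ (RingHom.surjective_pullbackFst_of_surjective _ _ hπ)
    (RingHom.ker_pullbackFst_le_nilradical _ _ hπ_nil)

/-- Let `𝒪` be a henselian valuation ring with fraction field `K`, `A` a
zero-dimensional local ring with residue field `K`, and `R = 𝒪 ×_K A`.  Then `R` is a
henselian local ring. -/
theorem stmt_7 (O K A : Type*) [CommRing O] [IsDomain O] [ValuationRing O]
    [HenselianLocalRing O]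
    [Field K] [Algebra O K] [IsFractionRing O K]
    [CommRing A] [IsLocalRing A] (hA : ringKrullDim A = 0)
    (π : A →+* K) (hπ : Function.Surjective π)
    (hker : RingHom.ker π = IsLocalRing.maximalIdeal A) :
    HenselianLocalRing (milnorRing O K A (algebraMap O K) π) :=
  stmt_7_general O K A hA π hπ hker
end

section
/- Let R be a local ring such that R/Nil(R) is a henselian local ring. Then R is a henselian local ring. -/
/-!
Lift a simple root of `f` modulo `m` to `R/I`, where Henselianity gives an honest root `b₀`.
Any lift `b` of `b₀` is then a root of `f` up to the nilpotent `f(b) ∈ I`, and `f'(b)` is still a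
unit because `b ≡ a₀` modulo `m`; Newton's iteration, which terminates on nilpotent errors,
corrects `b` by a nilpotent (hence `m`-small) amount to an exact root.
-/

open Polynomial IsLocalRing

namespace IsLocalRing

variable {R S : Type*} [CommRing R] [IsLocalRing R]

theorem map_mem_maximalIdeal_iff [CommRing S] [IsLocalRing S] (φ : R →+* S) [IsLocalHom φ]
    (x : R) : φ x ∈ maximalIdeal S ↔ x ∈ maximalIdeal R := by
  simp only [mem_maximalIdeal, mem_nonunits_iff, isUnit_map_iff]

theorem isUnit_eval_of_sub_mem_maximalIdeal_s8 {f : R[X]} {a b : R}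
    (hab : a - b ∈ maximalIdeal R) (hb : IsUnit (f.eval b)) : IsUnit (f.eval a) := by
  have hres : residue R a = residue R b := Ideal.Quotient.eq.2 hab
  rw [← residue_ne_zero_iff_isUnit, ← eval₂_at_apply, hres, eval₂_at_apply,
    residue_ne_zero_iff_isUnit]
  exact hb

end IsLocalRing

theorem HenselianLocalRing.of_quotient_of_le_nilradical {R : Type*} [CommRing R] [IsLocalRing R]
    {I : Ideal R} (hI : I ≤ nilradical R) [HenselianLocalRing (R ⧸ I)] :
    HenselianLocalRing R where
  is_henselian f hf a₀ h₁ h₂ := by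
    let π := Ideal.Quotient.mk I
    have : IsLocalHom π := isLocalHom_of_le_jacobson_bot I (hI.trans Ideal.radical_le_jacobson)
    obtain ⟨b₀, hb₀, hb₀a₀⟩ := is_henselian (f.map π) (hf.map π) (π a₀)
      (by rwa [eval_map, eval₂_at_apply, map_mem_maximalIdeal_iff])
      (by rw [derivative_map, eval_map, eval₂_at_apply]; exact h₂.map π)
    obtain ⟨b, rfl⟩ := Ideal.Quotient.mk_surjective b₀
    have hba₀ : b - a₀ ∈ maximalIdeal R := by
      rwa [← map_sub, map_mem_maximalIdeal_iff] at hb₀a₀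
    have hfb : IsNilpotent (f.eval b) := by
      rw [IsRoot, eval_map, eval₂_at_apply, Ideal.Quotient.eq_zero_iff_mem] at hb₀
      exact mem_nilradical.1 (hI hb₀)
    have hf'b : IsUnit (f.derivative.eval b) := isUnit_eval_of_sub_mem_maximalIdeal_s8 hba₀ h₂
    obtain ⟨a, ⟨hba, ha⟩, -⟩ :=
      existsUnique_nilpotent_sub_and_aeval_eq_zero (S := R) (by rwa [coe_aeval_eq_eval])
        (by rwa [coe_aeval_eq_eval])
    refine ⟨a, by rwa [coe_aeval_eq_eval] at ha, ?_⟩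
    have hab : a - b ∈ maximalIdeal R := by
      rw [← neg_sub]
      exact neg_mem (nilradical_le_prime _ (mem_nilradical.2 hba))
    simpa only [sub_add_sub_cancel] using add_mem hab hba₀

/-- Henselian-ness descends along nil thickenings: if `R` is a local ring such that
`R/Nil(R)` is a henselian local ring, then `R` is a henselian local ring. -/
theorem stmt_8 (R : Type*) [CommRing R] [IsLocalRing R]
    (h : HenselianLocalRing (R ⧸ nilradical R)) : HenselianLocalRing R :=
  HenselianLocalRing.of_quotient_of_le_nilradical le_rfl
end

section
/- Let 𝔽 be a ring and R an 𝔽-algebra such that the projection R → R_red = R/Nil(R) admits a section s: R_red → R of 𝔽-algebras. Then R is the filtered union (directed colimit) of the subalgebras R_λ = s(R_red)[S_λ] ⊆ R generated over s(R_red) by finite subsets S_λ ⊆ Nil(R), and each R_λ has finitely generated nilradical with (R_λ)_red ≅ R_red. -/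
/-!
Every `r : R` is `s (π r)` plus the nilpotent `r - s (π r)`, so a single nilpotent generator
reaches `r`. In `A = s(R_red)[S]`, induction on the generators writes every element as `b + m`
with `b ∈ s(R_red)` and `m` in the ideal of `A` generated by `S`; since `s(R_red) ≅ R_red` is
reduced, the nilpotent elements of `A` are exactly this finitely generated ideal. Finally
`A → R_red` is surjective with kernel `Nil(A)`, because nilpotency in `A` is tested in `R`.
-/

section

variable {F R : Type*} [CommRing F] [CommRing R] [Algebra F R]

theorem Algebra.exists_add_mem_span_of_mem_adjoin_union (B : Subalgebra F R) (S : Set R)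
    {r : R} (hr : r ∈ Algebra.adjoin F ((B : Set R) ∪ S)) :
    ∃ b ∈ B, ∃ m ∈ Ideal.span {x : Algebra.adjoin F ((B : Set R) ∪ S) | (x : R) ∈ S},
      r = b + m := by
  have hB : ∀ b ∈ B, b ∈ Algebra.adjoin F ((B : Set R) ∪ S) :=
    fun b hb ↦ Algebra.subset_adjoin (Or.inl hb)
  induction hr using Algebra.adjoin_induction with
  | mem x hx =>
    rcases hx with hx | hx
    · exact ⟨x, hx, 0, zero_mem _, by simp⟩
    · exact ⟨0, zero_mem _, ⟨x, Algebra.subset_adjoin (Or.inr hx)⟩, Ideal.subset_span hx,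
        by simp⟩
  | algebraMap c => exact ⟨algebraMap F R c, B.algebraMap_mem c, 0, zero_mem _, by simp⟩
  | add x y _ _ hx hy =>
    obtain ⟨b₁, hb₁, m₁, hm₁, rfl⟩ := hx
    obtain ⟨b₂, hb₂, m₂, hm₂, rfl⟩ := hy
    exact ⟨b₁ + b₂, add_mem hb₁ hb₂, m₁ + m₂, add_mem hm₁ hm₂, by push_cast; ring⟩
  | mul x y _ _ hx hy =>
    obtain ⟨b₁, hb₁, m₁, hm₁, rfl⟩ := hx
    obtain ⟨b₂, hb₂, m₂, hm₂, rfl⟩ := hy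
    refine ⟨b₁ * b₂, mul_mem hb₁ hb₂, ⟨b₁, hB b₁ hb₁⟩ * m₂ + m₁ * ⟨b₂, hB b₂ hb₂⟩ + m₁ * m₂,
      add_mem (add_mem (Ideal.mul_mem_left _ _ hm₂) (Ideal.mul_mem_right _ _ hm₁))
        (Ideal.mul_mem_right _ _ hm₁), by push_cast; ring⟩

theorem Subalgebra.nilradical_eq_comap (A : Subalgebra F R) :
    nilradical A = (nilradical R).comap A.val := by
  ext a
  exact (IsNilpotent.map_iff (f := A.val) Subtype.val_injective).symm

theorem Subalgebra.nilradical_adjoin_union_eq_span (B : Subalgebra F R)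
    (hB : ∀ b ∈ B, IsNilpotent b → b = 0) {S : Set R} (hS : S ⊆ nilradical R) :
    nilradical (Algebra.adjoin F ((B : Set R) ∪ S)) =
      Ideal.span {x : Algebra.adjoin F ((B : Set R) ∪ S) | (x : R) ∈ S} := by
  set A := Algebra.adjoin F ((B : Set R) ∪ S)
  have hspan : Ideal.span {x : A | (x : R) ∈ S} ≤ nilradical A := by
    rw [Ideal.span_le, Subalgebra.nilradical_eq_comap]
    exact fun x hx ↦ hS hx
  refine le_antisymm (fun a ha ↦ ?_) hspan
  obtain ⟨b, hb, m, hm, hab⟩ := Algebra.exists_add_mem_span_of_mem_adjoin_union B S a.2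
  have hb0 : b = 0 := by
    refine hB b hb ?_
    rw [eq_sub_of_add_eq hab.symm, ← mem_nilradical]
    rw [Subalgebra.nilradical_eq_comap] at ha hspan
    exact sub_mem ha (hspan hm)
  rw [hb0, zero_add] at hab
  rwa [Subtype.ext hab]

noncomputable def Subalgebra.quotientNilradicalEquiv (A : Subalgebra F R)
    (hA : Function.Surjective ((Ideal.Quotient.mk (nilradical R)).comp A.val.toRingHom)) :
    A ⧸ nilradical A ≃+* R ⧸ nilradical R :=
  (Ideal.quotEquivOfEq <| Ideal.ext fun a ↦ by
    rw [Subalgebra.nilradical_eq_comap, Ideal.mem_comap, RingHom.mem_ker, RingHom.comp_apply,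
      Ideal.Quotient.eq_zero_iff_mem]; rfl).trans
    (RingHom.quotientKerEquivOfSurjective hA)

variable (s : (R ⧸ nilradical R) →ₐ[F] R)

theorem sub_section_mk_mem_nilradical
    (hs : ∀ x : R ⧸ nilradical R, Ideal.Quotient.mk (nilradical R) (s x) = x) (r : R) :
    r - s (Ideal.Quotient.mk (nilradical R) r) ∈ nilradical R :=
  Ideal.Quotient.eq.mp (hs _).symm

theorem eq_zero_of_mem_range_of_isNilpotent
    (hs : ∀ x : R ⧸ nilradical R, Ideal.Quotient.mk (nilradical R) (s x) = x)
    {b : R} (hb : b ∈ s.range) (hnil : IsNilpotent b) : b = 0 := by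
  obtain ⟨y, rfl⟩ := hb
  have hy : y = 0 := by
    rw [← hs y, Ideal.Quotient.eq_zero_iff_mem, mem_nilradical]
    exact hnil
  rw [hy, map_zero]

theorem surjective_mk_comp_val_of_range_le
    (hs : ∀ x : R ⧸ nilradical R, Ideal.Quotient.mk (nilradical R) (s x) = x)
    {A : Subalgebra F R} (hA : s.range ≤ A) :
    Function.Surjective ((Ideal.Quotient.mk (nilradical R)).comp A.val.toRingHom) :=
  fun y ↦ ⟨⟨s y, hA ⟨y, rfl⟩⟩, hs y⟩

end

/-- Let `𝔽` be a ring and `R` an `𝔽`-algebra such that the projection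
`R → R_red = R/Nil(R)` admits a section `s` of `𝔽`-algebras.  Then `R` is the
filtered union of the subalgebras `s(R_red)[S]` generated over `s(R_red)` by finite
subsets `S ⊆ Nil(R)` (the family is monotone, hence directed, and its union is all of
`R`), and each such subalgebra has finitely generated nilradical and reduction
isomorphic to `R_red`. -/
theorem stmt_11 (F R : Type*) [CommRing F] [CommRing R] [Algebra F R]
    (s : (R ⧸ nilradical R) →ₐ[F] R)
    (hs : ∀ x : R ⧸ nilradical R, Ideal.Quotient.mk (nilradical R) (s x) = x) :
    (∀ r : R, ∃ S : Finset R, ↑S ⊆ (nilradical R : Set R) ∧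
        r ∈ Algebra.adjoin F ((s.range : Set R) ∪ ↑S)) ∧
    (∀ S T : Finset R, S ⊆ T →
        Algebra.adjoin F ((s.range : Set R) ∪ (↑S : Set R)) ≤
          Algebra.adjoin F ((s.range : Set R) ∪ (↑T : Set R))) ∧
    (∀ S : Finset R, ↑S ⊆ (nilradical R : Set R) →
        (nilradical (Algebra.adjoin F ((s.range : Set R) ∪ ↑S))).FG ∧
        Nonempty ((Algebra.adjoin F ((s.range : Set R) ∪ ↑S) ⧸
            nilradical (Algebra.adjoin F ((s.range : Set R) ∪ (↑S : Set R)))) ≃+*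
          (R ⧸ nilradical R))) := by
  set π := Ideal.Quotient.mk (nilradical R)
  refine ⟨fun r ↦ ⟨{r - s (π r)}, ?_, ?_⟩, fun S T hST ↦ ?_, fun S hS ↦ ⟨?_, ⟨?_⟩⟩⟩
  · simpa using sub_section_mk_mem_nilradical s hs r
  · rw [← add_sub_cancel (s (π r)) r]
    exact add_mem (Algebra.subset_adjoin (Or.inl ⟨_, rfl⟩)) (Algebra.subset_adjoin (by simp))
  · exact Algebra.adjoin_mono (Set.union_subset_union_right _ (Finset.coe_subset.mpr hST))
  · rw [Subalgebra.nilradical_adjoin_union_eq_span s.range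
      (fun _ hb ↦ eq_zero_of_mem_range_of_isNilpotent s hs hb) hS]
    exact Submodule.fg_span (S.finite_toSet.preimage Subtype.val_injective.injOn)
  · exact Subalgebra.quotientNilradicalEquiv _ (surjective_mk_comp_val_of_range_le s hs
      fun _ hb ↦ Algebra.subset_adjoin (Or.inl hb))
end

section
/- Let A be a commutative ring, K a field with a surjective ring homomorphism π: A → K whose kernel consists of nilpotent elements, 𝔽₀ ⊆ K a subfield of A's chosen coefficient field mapping into K, and x ∈ K transcendental over 𝔽₀ with 𝔽₀ ⊆ im(composite 𝔽₀ → A → K). If 𝔽₀ lifts to a subring of A, then the subfield 𝔽₀(x) ⊆ K lifts to A: there exists a ring homomorphism 𝔽₀(x) → A whose composition with π is the inclusion 𝔽₀(x) ⊆ K. (Concretely: choose any preimage a of x; every nonzero polynomial f over the lift of 𝔽₀ evaluated at a maps to a nonzero element of K, hence is a unit in A since ker π ⊆ Nil(A), so 𝔽₀[x] → A extends to 𝔽₀(x).) -/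
/-!
Since `ker π` is nil, `π` reflects units. Lifting `x` to some `a ∈ A`, the evaluation
`F[X] → A`, `X ↦ a`, therefore sends every nonzero polynomial to a unit (its image in `K` is
its value at the transcendental `x`), so it extends to `F(X) = RatFunc F`, which is
`F(x)` via `X ↦ x`.
-/

open IntermediateField Polynomial

theorem isUnit_of_isUnit_map_of_ker_isNilpotent {A B : Type*} [CommRing A] [Ring B]
    (π : A →+* B) (hπ : Function.Surjective π) (hker : ∀ a ∈ RingHom.ker π, IsNilpotent a)
    {a : A} (ha : IsUnit (π a)) : IsUnit a := by
  obtain ⟨b, hb⟩ := hπ ↑ha.unit⁻¹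
  have hnil : IsNilpotent (a * b - 1) := hker _ <| by simp [RingHom.mem_ker, hb]
  have hab : IsUnit (a * b) := by simpa using hnil.isUnit_add_one
  exact isUnit_of_mul_isUnit_left hab

theorem IsLocalization.exists_lift_of_ker_isNilpotent {R L A B : Type*} [CommRing R]
    (M : Submonoid R) [CommRing L] [Algebra R L] [IsLocalization M L] [CommRing A] [Ring B]
    (π : A →+* B) (hπ : Function.Surjective π) (hker : ∀ a ∈ RingHom.ker π, IsNilpotent a)
    (φ : R →+* A) (j : L →+* B) (hj : π.comp φ = j.comp (algebraMap R L)) :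
    ∃ ψ : L →+* A, π.comp ψ = j := by
  have hunit (m : M) : IsUnit (φ m) := by
    refine isUnit_of_isUnit_map_of_ker_isNilpotent π hπ hker ?_
    rw [← RingHom.comp_apply, hj, RingHom.comp_apply]
    exact (IsLocalization.map_units L m).map j
  refine ⟨IsLocalization.lift hunit, IsLocalization.ringHom_ext M ?_⟩
  rw [RingHom.comp_assoc, IsLocalization.lift_comp, hj]

/-- Let `A` be a commutative ring, `π : A → K` a surjective ring map onto a field with
nil kernel, `F ⊆ K` a subfield that lifts to `A` via `ι` (i.e. `π ∘ ι` is the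
inclusion `F ⊆ K`), and `x ∈ K` transcendental over `F`.  Then the subfield `F(x) ⊆ K`
lifts to `A`: there is a ring homomorphism `F(x) → A` whose composite with `π` is the
inclusion `F(x) ⊆ K`. -/
theorem stmt_12 (A K : Type*) [CommRing A] [Field K]
    (π : A →+* K) (hπ : Function.Surjective π)
    (hker : ∀ a ∈ RingHom.ker π, IsNilpotent a)
    (F : Subfield K) (ι : F →+* A) (hι : π.comp ι = F.subtype)
    (x : K) (hx : Transcendental F x) :
    ∃ ψ : (Subfield.closure ((F : Set K) ∪ {x})) →+* A,
      π.comp ψ = (Subfield.closure ((F : Set K) ∪ {x})).subtype := by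
  have hS : F⟮x⟯.toSubfield = Subfield.closure ((F : Set K) ∪ {x}) := by
    rw [adjoin_toSubfield, ← Subtype.range_coe (s := (F : Set K))]
    rfl
  let e : RatFunc F ≃+* Subfield.closure ((F : Set K) ∪ {x}) :=
    (RatFunc.algEquivOfTranscendental x hx).toRingEquiv.trans (RingEquiv.subfieldCongr hS)
  have he (r : RatFunc F) : (e r : K) = RatFunc.algEquivOfTranscendental x hx r := rfl
  obtain ⟨a, ha⟩ := hπ x
  have hj : π.comp (eval₂RingHom ι a) =
      ((Subfield.closure ((F : Set K) ∪ {x})).subtype.comp e).comp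
        (algebraMap F[X] (RatFunc F)) := by
    ext c
    · simp only [RingHom.comp_apply, coe_eval₂RingHom, eval₂_C, RingHom.coe_coe,
        Subfield.coe_subtype, he, RatFunc.algebraMap_C, ← RatFunc.algebraMap_eq_C,
        AlgEquiv.commutes]
      exact congr($hι c)
    · simp [he, ha]
  obtain ⟨ψ, hψ⟩ := IsLocalization.exists_lift_of_ker_isNilpotent (nonZeroDivisors F[X])
    π hπ hker _ _ hj
  refine ⟨ψ.comp e.symm.toRingHom, ?_⟩
  rw [← RingHom.comp_assoc, hψ, RingHom.comp_assoc]
  ext y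
  simp
end

section
/- Let A be an integral domain with fraction field K, and let 𝒪 ⊆ K be a valuation ring of K containing A. Let V = K[t]_{(t)} ×_K 𝒪 = {f ∈ K[t]_{(t)} : f(0) ∈ 𝒪} where K[t]_{(t)} → K is evaluation t ↦ 0. Then V is a valuation ring of the rational function field K(t) containing A[t], and dim V = dim 𝒪 + 1. In particular, the valuative dimension of A[t] is at least dim_v A + 1. -/
/-!
Evaluation at `t = 0` maps `V` onto `𝒪`, with kernel `t K[t]_(t) ≠ 0`. Every nonzero prime `P`
of `V` contains this kernel: if `0 ≠ y ∈ P` vanishes to order `m` at `0` and `f` lies in the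
kernel, then `f ^ (m + 1) / y` still vanishes at `0`, so it lies in `V` and `f ^ (m + 1) ∈ P`.
Hence `Spec V` is `Spec 𝒪` with the zero ideal added below it, and `dim V = dim 𝒪 + 1`.
-/

open Polynomial

local notation "ι" => algebraMap _ (RatFunc _)

section KrullDim

variable {R S : Type*} [CommRing R] [IsDomain R] [CommRing S] (f : R →+* S)

noncomputable def PrimeSpectrum.withBotOrderIsoOfSurjective (hf : Function.Surjective f)
    (hker : RingHom.ker f ≠ ⊥) (hle : ∀ P : Ideal R, P.IsPrime → P ≠ ⊥ → RingHom.ker f ≤ P) :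
    WithBot (PrimeSpectrum S) ≃o PrimeSpectrum R := by
  have comap_ne_bot (q : PrimeSpectrum S) : ¬ q.asIdeal.comap f ≤ ⊥ := fun h =>
    hker (eq_bot_iff.2 ((Ideal.comap_mono bot_le).trans h))
  let e : WithBot (PrimeSpectrum S) ↪o PrimeSpectrum R :=
    OrderEmbedding.ofMapLEIff (WithBot.recBotCoe ⟨⊥, Ideal.isPrime_bot⟩ (comap f)) <| by
      intro a b
      induction a using WithBot.recBotCoe <;> induction b using WithBot.recBotCoe
      · exact iff_of_true le_rfl le_rfl
      · exact iff_of_true bot_le bot_le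
      · exact iff_of_false (comap_ne_bot _) (WithBot.not_coe_le_bot _)
      · rw [WithBot.coe_le_coe]
        exact Ideal.comap_le_comap_iff_of_surjective f hf _ _
  refine RelIso.ofSurjective e fun P => ?_
  by_cases hP : P.asIdeal = ⊥
  · exact ⟨⊥, PrimeSpectrum.ext hP.symm⟩
  · have hkerP := hle _ P.isPrime hP
    refine ⟨(⟨P.asIdeal.map f, Ideal.map_isPrime_of_surjective hf hkerP⟩ :
      PrimeSpectrum S), PrimeSpectrum.ext ?_⟩
    exact (Ideal.comap_map_of_surjective' f hf _).trans (sup_eq_left.2 hkerP)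

theorem ringKrullDim_eq_add_one_of_surjective [Nontrivial S] (hf : Function.Surjective f)
    (hker : RingHom.ker f ≠ ⊥) (hle : ∀ P : Ideal R, P.IsPrime → P ≠ ⊥ → RingHom.ker f ≤ P) :
    ringKrullDim R = ringKrullDim S + 1 := by
  rw [ringKrullDim, ringKrullDim,
    ← Order.krullDim_eq_of_orderIso (PrimeSpectrum.withBotOrderIsoOfSurjective f hf hker hle),
    Order.krullDim_withBot]

end KrullDim

namespace RatFunc

variable {K : Type*} [Field K]

theorem eval_zero_num_ne_zero_or_eval_zero_denom_ne_zero (x : RatFunc K) :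
    x.num.eval 0 ≠ 0 ∨ x.denom.eval 0 ≠ 0 := by
  by_contra! h
  simp only [← coeff_zero_eq_eval_zero, ← X_dvd_iff] at h
  exact not_isUnit_X (x.isCoprime_num_denom.isUnit_of_dvd' h.1 h.2)

theorem eval_zero_denom_div_ne_zero {p q : K[X]} (hq : q.eval 0 ≠ 0) :
    (ι p / ι q : RatFunc K).denom.eval 0 ≠ 0 :=
  fun h => hq (eval_eq_zero_of_dvd_of_eval_eq_zero (denom_div_dvd p q) h)

theorem eval_zero_div {p q : K[X]} (hq : q.eval 0 ≠ 0) :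
    eval (RingHom.id K) 0 (ι p / ι q) = p.eval 0 / q.eval 0 := by
  have hq0 : q ≠ 0 := by rintro rfl; simp at hq
  have key := congrArg (Polynomial.eval 0)
    ((num_mul_eq_mul_denom_iff (x := ι p / ι q) hq0).2 rfl)
  simp only [Polynomial.eval_mul] at key
  rw [eval, eval₂_id, eval₂_id, div_eq_div_iff (eval_zero_denom_div_ne_zero hq) hq, key]

theorem exists_num_eq_X_pow_mul {x : RatFunc K} (hx : x ≠ 0) :
    ∃ (k : ℕ) (g : K[X]), x.num = Polynomial.X ^ k * g ∧ g.eval 0 ≠ 0 := by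
  obtain ⟨g, hg, hXg⟩ := x.num.exists_eq_pow_rootMultiplicity_mul_and_not_dvd (num_ne_zero hx) 0
  rw [map_zero, sub_zero, X_dvd_iff, coeff_zero_eq_eval_zero] at *
  exact ⟨_, g, hg, hXg⟩

end RatFunc

namespace ValuationSubring

variable {K : Type*} [Field K] (O : ValuationSubring K)

/-- The fibre product `K[t]_(t) ×_K O`: fractions regular at `0` whose value at `0` lies in `O`. -/
def compositeRatFunc : ValuationSubring (RatFunc K) where
  carrier := {x | ∃ p q : K[X], q.eval 0 ≠ 0 ∧ x = ι p / ι q ∧ p.eval 0 / q.eval 0 ∈ O}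
  one_mem' := ⟨1, 1, by simp, by simp, by simp⟩
  zero_mem' := ⟨0, 1, by simp, by simp, by simp⟩
  mul_mem' := by
    rintro _ _ ⟨p₁, q₁, hq₁, rfl, hO₁⟩ ⟨p₂, q₂, hq₂, rfl, hO₂⟩
    refine ⟨p₁ * p₂, q₁ * q₂, by simp [hq₁, hq₂], by simp only [map_mul, div_mul_div_comm], ?_⟩
    simpa only [eval_mul, div_mul_div_comm] using O.mul_mem _ _ hO₁ hO₂
  add_mem' := by
    rintro _ _ ⟨p₁, q₁, hq₁, rfl, hO₁⟩ ⟨p₂, q₂, hq₂, rfl, hO₂⟩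
    have hq₁' : ι q₁ ≠ (0 : RatFunc K) := RatFunc.algebraMap_ne_zero (by rintro rfl; simp at hq₁)
    have hq₂' : ι q₂ ≠ (0 : RatFunc K) := RatFunc.algebraMap_ne_zero (by rintro rfl; simp at hq₂)
    refine ⟨p₁ * q₂ + q₁ * p₂, q₁ * q₂, by simp [hq₁, hq₂], ?_, ?_⟩
    · simp only [div_add_div _ _ hq₁' hq₂', map_add, map_mul]
    · simpa only [eval_add, eval_mul, div_add_div _ _ hq₁ hq₂] using O.add_mem _ _ hO₁ hO₂
  neg_mem' := by
    rintro _ ⟨p, q, hq, rfl, hO⟩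
    exact ⟨-p, q, hq, by rw [map_neg, neg_div], by simpa [neg_div] using O.neg_mem _ hO⟩
  mem_or_inv_mem' := by
    intro x
    have hx := (RatFunc.num_div_denom x).symm
    have hx_inv : x⁻¹ = ι x.denom / ι x.num := by rw [hx, inv_div, RatFunc.num_div_denom]
    by_cases hn : x.num.eval 0 = 0
    · have hd := (RatFunc.eval_zero_num_ne_zero_or_eval_zero_denom_ne_zero x).resolve_left
        (not_not.2 hn)
      exact Or.inl ⟨_, _, hd, hx, by simp [hn]⟩
    by_cases hd : x.denom.eval 0 = 0
    · exact Or.inr ⟨_, _, hn, hx_inv, by simp [hd]⟩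
    refine (O.mem_or_inv_mem (x.num.eval 0 / x.denom.eval 0)).imp
      (fun h => ⟨_, _, hd, hx, h⟩) (fun h => ⟨_, _, hn, hx_inv, by rwa [inv_div] at h⟩)

variable {O}

theorem algebraMap_mem_compositeRatFunc {p : K[X]} (hp : p.eval 0 ∈ O) :
    ι p ∈ O.compositeRatFunc :=
  ⟨p, 1, by simp, by simp, by simpa using hp⟩

theorem X_mul_div_mem_compositeRatFunc (p : K[X]) {q : K[X]} (hq : q.eval 0 ≠ 0) :
    ι (X * p) / ι q ∈ O.compositeRatFunc :=
  ⟨X * p, q, hq, rfl, by simp⟩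

theorem eval_zero_denom_ne_zero_of_mem_compositeRatFunc {x : RatFunc K}
    (hx : x ∈ O.compositeRatFunc) : x.denom.eval 0 ≠ 0 := by
  obtain ⟨p, q, hq, rfl, -⟩ := hx
  exact RatFunc.eval_zero_denom_div_ne_zero hq

variable (O)

noncomputable def compositeRatFuncResidue : O.compositeRatFunc →+* O :=
  RingHom.codRestrict (R := O.compositeRatFunc)
    { toFun x := RatFunc.eval (RingHom.id K) 0 x
      map_one' := RatFunc.eval_one _ _
      map_zero' := RatFunc.eval_zero _ _
      map_mul' x y := RatFunc.eval_mul _ _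
        (eval_zero_denom_ne_zero_of_mem_compositeRatFunc x.2)
        (eval_zero_denom_ne_zero_of_mem_compositeRatFunc y.2)
      map_add' x y := RatFunc.eval_add _ _
        (eval_zero_denom_ne_zero_of_mem_compositeRatFunc x.2)
        (eval_zero_denom_ne_zero_of_mem_compositeRatFunc y.2) }
    O (by
      rintro ⟨_, p, q, hq, rfl, hO⟩
      simpa [RatFunc.eval_zero_div hq] using hO)

theorem coe_compositeRatFuncResidue (x : O.compositeRatFunc) :
    (O.compositeRatFuncResidue x : K) = RatFunc.eval (RingHom.id K) 0 x := rfl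

theorem compositeRatFuncResidue_surjective : Function.Surjective O.compositeRatFuncResidue := by
  rintro ⟨c, hc⟩
  exact ⟨⟨ι (C c), algebraMap_mem_compositeRatFunc (by simpa using hc)⟩,
    Subtype.ext (by simp [coe_compositeRatFuncResidue])⟩

theorem ker_compositeRatFuncResidue_ne_bot : RingHom.ker O.compositeRatFuncResidue ≠ ⊥ := by
  intro h
  let t : O.compositeRatFunc := ⟨ι X, algebraMap_mem_compositeRatFunc (by simp)⟩
  have ht : t ∈ RingHom.ker O.compositeRatFuncResidue :=
    Subtype.ext (by simp [t, coe_compositeRatFuncResidue])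
  rw [h, Ideal.mem_bot] at ht
  exact RatFunc.algebraMap_ne_zero X_ne_zero (congrArg Subtype.val ht)

variable {O} in
theorem eval_zero_num_eq_zero_of_mem_ker {f : O.compositeRatFunc}
    (hf : f ∈ RingHom.ker O.compositeRatFuncResidue) : (f : RatFunc K).num.eval 0 = 0 := by
  have := congrArg Subtype.val (RingHom.mem_ker.1 hf)
  rw [coe_compositeRatFuncResidue, RatFunc.eval, eval₂_id, eval₂_id] at this
  exact (div_eq_zero_iff.1 this).resolve_right
    (eval_zero_denom_ne_zero_of_mem_compositeRatFunc f.2)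

theorem ker_compositeRatFuncResidue_le {P : Ideal O.compositeRatFunc} (hP : P.IsPrime)
    (hP0 : P ≠ ⊥) : RingHom.ker O.compositeRatFuncResidue ≤ P := by
  obtain ⟨y, hyP, hy0⟩ := Submodule.exists_mem_ne_zero_of_ne_bot hP0
  intro f hf
  rcases eq_or_ne f 0 with rfl | hf0
  · exact P.zero_mem
  obtain ⟨m, g, hy, hg⟩ := RatFunc.exists_num_eq_X_pow_mul (x := (y : RatFunc K)) (by simpa)
  obtain ⟨_ | k, g', hf', hg'⟩ := RatFunc.exists_num_eq_X_pow_mul (x := (f : RatFunc K)) (by simpa)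
  · rw [pow_zero, one_mul] at hf'
    exact absurd (hf' ▸ eval_zero_num_eq_zero_of_mem_ker hf) hg'
  have hfd := eval_zero_denom_ne_zero_of_mem_compositeRatFunc f.2
  -- `f ^ (m + 1) / y` vanishes to order `(k + 1) * (m + 1) - m ≥ 1` at `0`.
  let z : O.compositeRatFunc :=
    ⟨ι (X * (X ^ (k * (m + 1)) * g' ^ (m + 1) * (y : RatFunc K).denom)) /
      ι ((f : RatFunc K).denom ^ (m + 1) * g),
      X_mul_div_mem_compositeRatFunc _ (by simp [hfd, hg])⟩
  have hfy : f ^ (m + 1) = y * z := by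
    apply Subtype.ext
    rw [SubmonoidClass.coe_pow, MulMemClass.coe_mul, ← RatFunc.num_div_denom (f : RatFunc K),
      ← RatFunc.num_div_denom (y : RatFunc K), hf', hy]
    have hfd' := RatFunc.algebraMap_ne_zero (f : RatFunc K).denom_ne_zero
    have hyd' := RatFunc.algebraMap_ne_zero (y : RatFunc K).denom_ne_zero
    have hg0 : ι g ≠ (0 : RatFunc K) := RatFunc.algebraMap_ne_zero (by rintro rfl; simp at hg)
    simp only [z, map_mul, map_pow]
    rw [div_pow, div_mul_div_comm, div_eq_div_iff (pow_ne_zero _ hfd')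
      (mul_ne_zero hyd' (mul_ne_zero (pow_ne_zero _ hfd') hg0))]
    ring
  exact hP.mem_of_pow_mem (m + 1) (hfy ▸ P.mul_mem_right z hyP)

theorem ringKrullDim_compositeRatFunc :
    ringKrullDim O.compositeRatFunc = ringKrullDim O + 1 :=
  ringKrullDim_eq_add_one_of_surjective _ O.compositeRatFuncResidue_surjective
    O.ker_compositeRatFuncResidue_ne_bot fun _ hP hP0 => O.ker_compositeRatFuncResidue_le hP hP0

end ValuationSubring

/-- Let `A` be a domain with fraction field `K` and `𝒪 ⊆ K` a valuation ring of `K`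
containing `A`.  Then `V = {f ∈ K[t]_(t) : f(0) ∈ 𝒪}` is a valuation ring of the
rational function field `K(t)` containing `A[t]`, and `dim V = dim 𝒪 + 1`; in
particular the valuative dimension of `A[t]` is at least `dim_v A + 1`. -/
theorem stmt_16 (A : Type*) [CommRing A] [IsDomain A]
    (O : ValuationSubring (FractionRing A))
    (hO : ∀ a : A, algebraMap A (FractionRing A) a ∈ O) :
    ∃ V : ValuationSubring (RatFunc (FractionRing A)),
      (∀ x : RatFunc (FractionRing A), x ∈ V ↔
        ∃ p q : Polynomial (FractionRing A), Polynomial.eval 0 q ≠ 0 ∧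
          x = algebraMap (Polynomial (FractionRing A)) (RatFunc (FractionRing A)) p /
              algebraMap (Polynomial (FractionRing A)) (RatFunc (FractionRing A)) q ∧
          Polynomial.eval 0 p / Polynomial.eval 0 q ∈ O) ∧
      (∀ p : Polynomial A,
        algebraMap (Polynomial (FractionRing A)) (RatFunc (FractionRing A))
          (p.map (algebraMap A (FractionRing A))) ∈ V) ∧
      ringKrullDim V = ringKrullDim O + 1 :=
  ⟨O.compositeRatFunc, fun _ => Iff.rfl,
    fun p => ValuationSubring.algebraMap_mem_compositeRatFunc (by rw [eval_zero_map]; exact hO _),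
    O.ringKrullDim_compositeRatFunc⟩
end
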